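/- Let w be an element of a finite crystallographic Weyl group with inversion set 𝔯_w = {β positive : w(β) negative}, and define for a positive root β: cross_w(β) = { w(β + ∑_{i=1}^m β_i) : β_i ∈ 𝔯_w, m ≥ 0, the argument is a root } ∩ (positive roots). Then for any simple root α not in 𝔯_w, the set cross_w(α) contains at least one simple root. -/

import Mathlib

/-!
Take `δ ∈ cross_w(α)` with `f δ` minimal: the set is finite and contains `w α`. If `δ = β + γ`
with `β, γ` positive, put `x = w⁻¹ β`, `y = w⁻¹ γ`, so `x + y = α + ∑ bᵢ` with `bᵢ ∈ 𝔯_w`.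
If `x` is negative then `-x ∈ 𝔯_w`, so `γ = w (α + ∑ bᵢ - x) ∈ cross_w(α)`. Otherwise, since
`⟪x + y, α + ∑ bᵢ⟫ = ‖x + y‖² > 0`, one of `x, y` pairs positively with `α` or with some `bᵢ`,
and the crystallographic condition makes the difference a root. Pairing with `α`, the simplicity
of `α` and the sign of `f (w (∑ bᵢ))` force `x - α ∈ 𝔯_w`; pairing with `bᵢ`, either `bᵢ - x ∈ 𝔯_w`
or `x - bᵢ` replaces `x` in a shorter sum. In every case `β` or `γ` lies in `cross_w(α)`,
contradicting the minimality of `f δ`.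
-/

/-- The inversion set of a Weyl group element `w`: positive roots sent to negative roots. -/
def invSet {V : Type*} [AddCommGroup V] [Module ℝ V] (P : Set V) (w : V ≃ₗ[ℝ] V) : Set V :=
  {β ∈ P | w β ∉ P}

/-- `crossSet P w β` is the set
`{ w(β + ∑ βᵢ) : βᵢ ∈ invSet, m ≥ 0, the image is a root } ∩ P`. -/
def crossSet {V : Type*} [AddCommGroup V] [Module ℝ V] (P : Set V) (w : V ≃ₗ[ℝ] V)
    (β : V) : Set V :=
  {γ | γ ∈ P ∧ ∃ (n : ℕ) (b : Fin n → V),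
    (∀ i, b i ∈ invSet P w) ∧ γ = w (β + ∑ i, b i)}

section

variable {V : Type*}

theorem mem_crossSet_iff [AddCommGroup V] [Module ℝ V] {P : Set V} {w : V ≃ₗ[ℝ] V} {β γ : V} :
    γ ∈ crossSet P w β ↔ γ ∈ P ∧ w.symm γ - β ∈ AddSubmonoid.closure (invSet P w) := by
  constructor
  · rintro ⟨hγ, n, b, hb, rfl⟩
    refine ⟨hγ, ?_⟩
    simpa using AddSubmonoid.sum_mem _ fun i _ => AddSubmonoid.subset_closure (hb i)
  · rintro ⟨hγ, hmem⟩
    obtain ⟨l, hl, hsum⟩ := AddSubmonoid.exists_list_of_mem_closure hmem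
    refine ⟨hγ, l.length, fun i => l[i.1], fun i => hl _ (List.getElem_mem _), ?_⟩
    simp [hsum]

theorem exists_mem_inner_sum_pos [NormedAddCommGroup V] [InnerProductSpace ℝ V] {s : Multiset V}
    (hs : s.sum ≠ 0) : ∃ z ∈ s, 0 < inner ℝ s.sum z := by
  by_contra! h
  have : inner ℝ s.sum s.sum ≤ (0 : ℝ) := by
    rw [show inner ℝ s.sum s.sum = (s.map (inner ℝ s.sum)).sum from
      map_multiset_sum (innerₗ V s.sum) s]
    simpa using Multiset.sum_map_le_sum_map _ (fun _ => (0 : ℝ)) h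
  exact hs (real_inner_self_nonpos.mp this)

section PositiveRoots

variable [AddCommGroup V] [Module ℝ V] {Rt : Set V} {f : V →ₗ[ℝ] ℝ} {w : V ≃ₗ[ℝ] V} {x : V}

def positiveRoots (Rt : Set V) (f : V →ₗ[ℝ] ℝ) : Set V := {β ∈ Rt | 0 < f β}

theorem mem_invSet_positiveRoots (hf : ∀ β ∈ Rt, f β ≠ 0) (hw : ∀ β ∈ Rt, w β ∈ Rt)
    (hx : x ∈ Rt) : x ∈ invSet (positiveRoots Rt f) w ↔ 0 < f x ∧ f (w x) < 0 := by
  constructor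
  · rintro ⟨⟨-, hfx⟩, hwx⟩
    exact ⟨hfx, lt_of_le_of_ne (not_lt.1 fun h => hwx ⟨hw x hx, h⟩) (hf _ (hw x hx))⟩
  · rintro ⟨hfx, hwx⟩
    exact ⟨⟨hx, hfx⟩, fun h => h.2.not_gt hwx⟩

theorem apply_lt_zero_of_mem_invSet (hf : ∀ β ∈ Rt, f β ≠ 0) (hw : ∀ β ∈ Rt, w β ∈ Rt)
    (hx : x ∈ invSet (positiveRoots Rt f) w) : f (w x) < 0 :=
  ((mem_invSet_positiveRoots hf hw hx.1.1).1 hx).2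

theorem apply_sum_lt_zero_of_mem_invSet (hf : ∀ β ∈ Rt, f β ≠ 0) (hw : ∀ β ∈ Rt, w β ∈ Rt)
    {s : Multiset V} (hs : ∀ b ∈ s, b ∈ invSet (positiveRoots Rt f) w) (hs0 : s ≠ 0) :
    f (w s.sum) < 0 := by
  rw [map_multiset_sum, map_multiset_sum, Multiset.map_map]
  simpa using Multiset.sum_lt_sum_of_nonempty (g := fun _ => (0 : ℝ)) hs0
    fun b hb => apply_lt_zero_of_mem_invSet hf hw (hs b hb)

theorem neg_mem_invSet (hneg : ∀ β ∈ Rt, -β ∈ Rt) (hx : x ∈ Rt) (hfx : f x < 0)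
    (hwx : 0 < f (w x)) : -x ∈ invSet (positiveRoots Rt f) w :=
  ⟨⟨hneg x hx, by simpa using hfx⟩, fun h => absurd h.2 (by simpa using hwx.le)⟩

end PositiveRoots

section InnerProduct

variable [NormedAddCommGroup V] [InnerProductSpace ℝ V] {Rt : Set V} {f : V →ₗ[ℝ] ℝ}
  {w : V ≃ₗ[ℝ] V} {α x y : V}

theorem sub_mem_invSet_of_inner_pos (hneg : ∀ β ∈ Rt, -β ∈ Rt)
    (hcrys : ∀ β ∈ Rt, ∀ γ ∈ Rt, 0 < (inner ℝ β γ : ℝ) → β - γ ∈ Rt ∨ β - γ = 0)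
    (hf : ∀ β ∈ Rt, f β ≠ 0) (hw : ∀ β ∈ Rt, w β ∈ Rt) (hα : α ∈ Rt)
    (hαsimple : ¬∃ β ∈ positiveRoots Rt f, ∃ γ ∈ positiveRoots Rt f, α = β + γ)
    {s : Multiset V} (hs : ∀ b ∈ s, b ∈ invSet (positiveRoots Rt f) w) (hs0 : s ≠ 0)
    (hx : x ∈ positiveRoots Rt f) (hwy : 0 < f (w y)) (hxy : x + y = α + s.sum)
    (hxα : 0 < (inner ℝ x α : ℝ)) : x - α ∈ invSet (positiveRoots Rt f) w := by
  have hsum : s.sum = x - α + y := by rw [sub_add_eq_add_sub, hxy]; abel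
  have hws := apply_sum_lt_zero_of_mem_invSet hf hw hs hs0
  rw [hsum, map_add, map_add] at hws
  rcases hcrys x hx.1 α hα hxα with hroot | hzero
  · rcases (hf _ hroot).lt_or_gt with hlt | hgt
    · refine absurd ⟨x, hx, α - x, ⟨?_, ?_⟩, by abel⟩ hαsimple
      · simpa using hneg _ hroot
      · simpa using hlt
    · refine (mem_invSet_positiveRoots hf hw hroot).2 ⟨hgt, ?_⟩
      exact (hf _ (hw _ hroot)).lt_or_gt.resolve_right fun h => by linarith
  · rw [hzero, map_zero, map_zero] at hws
    linarith

theorem sub_mem_closure_or_of_inner_pos_of_mem [DecidableEq V] (hneg : ∀ β ∈ Rt, -β ∈ Rt)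
    (hcrys : ∀ β ∈ Rt, ∀ γ ∈ Rt, 0 < (inner ℝ β γ : ℝ) → β - γ ∈ Rt ∨ β - γ = 0)
    (hf : ∀ β ∈ Rt, f β ≠ 0) (hw : ∀ β ∈ Rt, w β ∈ Rt)
    {s : Multiset V} (hs : ∀ b ∈ s, b ∈ invSet (positiveRoots Rt f) w) {b : V} (hb : b ∈ s)
    (hx : x ∈ positiveRoots Rt f) (hwx : w x ∈ positiveRoots Rt f) (hxy : x + y = α + s.sum)
    (hxb : 0 < (inner ℝ x b : ℝ))
    (ih : ∀ x', x' ∈ positiveRoots Rt f → w x' ∈ positiveRoots Rt f →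
      x' + y = α + (s.erase b).sum →
      x' - α ∈ AddSubmonoid.closure (invSet (positiveRoots Rt f) w) ∨
        y - α ∈ AddSubmonoid.closure (invSet (positiveRoots Rt f) w)) :
    x - α ∈ AddSubmonoid.closure (invSet (positiveRoots Rt f) w) ∨
      y - α ∈ AddSubmonoid.closure (invSet (positiveRoots Rt f) w) := by
  have hbinv := hs b hb
  have hwb := apply_lt_zero_of_mem_invSet hf hw hbinv
  have hsum : s.sum = b + (s.erase b).sum := (Multiset.sum_erase hb).symm
  have hwxb : 0 < f (w (x - b)) := by
    rw [map_sub, map_sub]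
    linarith [hwx.2]
  rcases hcrys x hx.1 b hbinv.1.1 hxb with hroot | hzero
  · rcases (hf _ hroot).lt_or_gt with hlt | hgt
    · have hy : y - α = (s.erase b).sum + -(x - b) := by
        rw [show y - α = x + y - α - x by abel, hxy, hsum]
        abel
      refine Or.inr (hy ▸ add_mem ?_ (AddSubmonoid.subset_closure
        (neg_mem_invSet hneg hroot hlt hwxb)))
      exact AddSubmonoid.multiset_sum_mem _ _ fun c hc =>
        AddSubmonoid.subset_closure (hs c (Multiset.mem_of_mem_erase hc))
    · refine (ih (x - b) ⟨hroot, hgt⟩ ⟨hw _ hroot, hwxb⟩ ?_).imp_left fun h => ?_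
      · rw [sub_add_eq_add_sub, hxy, hsum]
        abel
      · convert add_mem h (AddSubmonoid.subset_closure hbinv) using 1
        abel
  · rw [hzero, map_zero, map_zero] at hwxb
    exact hwxb.false.elim

theorem sub_mem_closure_or_of_add_eq_add_sum [DecidableEq V] (hneg : ∀ β ∈ Rt, -β ∈ Rt)
    (hcrys : ∀ β ∈ Rt, ∀ γ ∈ Rt, 0 < (inner ℝ β γ : ℝ) → β - γ ∈ Rt ∨ β - γ = 0)
    (hf : ∀ β ∈ Rt, f β ≠ 0) (hw : ∀ β ∈ Rt, w β ∈ Rt) (hα : α ∈ Rt)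
    (hαsimple : ¬∃ β ∈ positiveRoots Rt f, ∃ γ ∈ positiveRoots Rt f, α = β + γ)
    (s : Multiset V) (hs : ∀ b ∈ s, b ∈ invSet (positiveRoots Rt f) w)
    (hx : x ∈ positiveRoots Rt f) (hwx : w x ∈ positiveRoots Rt f)
    (hy : y ∈ positiveRoots Rt f) (hwy : w y ∈ positiveRoots Rt f) (hxy : x + y = α + s.sum) :
    x - α ∈ AddSubmonoid.closure (invSet (positiveRoots Rt f) w) ∨
      y - α ∈ AddSubmonoid.closure (invSet (positiveRoots Rt f) w) := by
  induction s using Multiset.strongInductionOn generalizing x y with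
  | ih s ih =>
  rcases eq_or_ne s 0 with rfl | hs0
  · exact absurd ⟨x, hx, y, hy, by simpa using hxy.symm⟩ hαsimple
  have step : ∀ x y, x ∈ positiveRoots Rt f → w x ∈ positiveRoots Rt f →
      y ∈ positiveRoots Rt f → w y ∈ positiveRoots Rt f → x + y = α + s.sum →
      ∀ z ∈ α ::ₘ s, 0 < (inner ℝ x z : ℝ) →
      x - α ∈ AddSubmonoid.closure (invSet (positiveRoots Rt f) w) ∨
        y - α ∈ AddSubmonoid.closure (invSet (positiveRoots Rt f) w) := by
    intro x y hx hwx hy hwy hxy z hz hxz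
    rcases Multiset.mem_cons.1 hz with rfl | hz
    · exact Or.inl <| AddSubmonoid.subset_closure <|
        sub_mem_invSet_of_inner_pos hneg hcrys hf hw hα hαsimple hs hs0 hx hwy.2 hxy hxz
    · refine sub_mem_closure_or_of_inner_pos_of_mem hneg hcrys hf hw hs hz hx hwx hxy hxz
        fun x' hx' hwx' hx'y => ih _ (Multiset.erase_lt.2 hz)
          (fun c hc => hs c (Multiset.mem_of_mem_erase hc)) hx' hwx' hy hwy hx'y
  have hne : (α ::ₘ s).sum ≠ 0 := by
    rw [Multiset.sum_cons, ← hxy]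
    intro h
    linarith [congrArg f h, map_add f x y, map_zero f, hx.2, hy.2]
  obtain ⟨z, hz, hpos⟩ := exists_mem_inner_sum_pos hne
  rw [Multiset.sum_cons, ← hxy, inner_add_left] at hpos
  rcases lt_or_ge 0 (inner ℝ x z : ℝ) with hxz | hxz
  · exact step x y hx hwx hy hwy hxy z hz hxz
  · exact (step y x hy hwy hx hwx (by rw [add_comm, hxy]) z hz (by linarith)).symm

theorem sub_mem_closure_or_of_add_sub_mem_closure (hneg : ∀ β ∈ Rt, -β ∈ Rt)
    (hcrys : ∀ β ∈ Rt, ∀ γ ∈ Rt, 0 < (inner ℝ β γ : ℝ) → β - γ ∈ Rt ∨ β - γ = 0)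
    (hf : ∀ β ∈ Rt, f β ≠ 0) (hw : ∀ β ∈ Rt, w β ∈ Rt) (hα : α ∈ Rt)
    (hαsimple : ¬∃ β ∈ positiveRoots Rt f, ∃ γ ∈ positiveRoots Rt f, α = β + γ)
    (hx : x ∈ Rt) (hwx : w x ∈ positiveRoots Rt f) (hy : y ∈ Rt) (hwy : w y ∈ positiveRoots Rt f)
    (hxy : x + y - α ∈ AddSubmonoid.closure (invSet (positiveRoots Rt f) w)) :
    x - α ∈ AddSubmonoid.closure (invSet (positiveRoots Rt f) w) ∨
      y - α ∈ AddSubmonoid.closure (invSet (positiveRoots Rt f) w) := by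
  classical
  rcases (hf x hx).lt_or_gt with hfx | hfx
  · refine Or.inr ?_
    convert add_mem hxy (AddSubmonoid.subset_closure (neg_mem_invSet hneg hx hfx hwx.2)) using 1
    abel
  rcases (hf y hy).lt_or_gt with hfy | hfy
  · refine Or.inl ?_
    convert add_mem hxy (AddSubmonoid.subset_closure (neg_mem_invSet hneg hy hfy hwy.2)) using 1
    abel
  obtain ⟨s, hs, hsum⟩ := AddSubmonoid.exists_multiset_of_mem_closure hxy
  refine sub_mem_closure_or_of_add_eq_add_sum hneg hcrys hf hw hα hαsimple s hs
    ⟨hx, hfx⟩ hwx ⟨hy, hfy⟩ hwy ?_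
  rw [hsum]
  abel

theorem mem_crossSet_or_of_add_mem_crossSet (hneg : ∀ β ∈ Rt, -β ∈ Rt)
    (hcrys : ∀ β ∈ Rt, ∀ γ ∈ Rt, 0 < (inner ℝ β γ : ℝ) → β - γ ∈ Rt ∨ β - γ = 0)
    (hf : ∀ β ∈ Rt, f β ≠ 0) (hw : ∀ β ∈ Rt, w β ∈ Rt) (hw' : ∀ β ∈ Rt, w.symm β ∈ Rt)
    (hα : α ∈ Rt) (hαsimple : ¬∃ β ∈ positiveRoots Rt f, ∃ γ ∈ positiveRoots Rt f, α = β + γ)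
    {β γ : V} (hβ : β ∈ positiveRoots Rt f) (hγ : γ ∈ positiveRoots Rt f)
    (hβγ : β + γ ∈ crossSet (positiveRoots Rt f) w α) :
    β ∈ crossSet (positiveRoots Rt f) w α ∨ γ ∈ crossSet (positiveRoots Rt f) w α := by
  simp only [mem_crossSet_iff, map_add] at hβγ ⊢
  refine (sub_mem_closure_or_of_add_sub_mem_closure hneg hcrys hf hw hα hαsimple (hw' β hβ.1)
    (by simpa using hβ) (hw' γ hγ.1) (by simpa using hγ) hβγ.2).imp (⟨hβ, ·⟩) (⟨hγ, ·⟩)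

end InnerProduct

end

theorem crossSet_contains_simple_general {V : Type*} [NormedAddCommGroup V] [InnerProductSpace ℝ V]
    (Rt : Set V) (hfin : Rt.Finite)
    (hneg : ∀ β ∈ Rt, -β ∈ Rt)
    (hcrys : ∀ β ∈ Rt, ∀ γ ∈ Rt, 0 < (inner ℝ β γ : ℝ) → β - γ ∈ Rt ∨ β - γ = 0)
    (f : V →ₗ[ℝ] ℝ) (hf : ∀ β ∈ Rt, f β ≠ 0)
    (P : Set V) (hP : P = {β ∈ Rt | 0 < f β})
    (w : V ≃ₗ[ℝ] V) (hw : ∀ β ∈ Rt, w β ∈ Rt) (hw' : ∀ β ∈ Rt, w.symm β ∈ Rt)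
    (α : V) (hα : α ∈ P) (hαsimple : ¬∃ β ∈ P, ∃ γ ∈ P, α = β + γ)
    (hαinv : α ∉ invSet P w) :
    ∃ α', (α' ∈ P ∧ ¬∃ β ∈ P, ∃ γ ∈ P, α' = β + γ) ∧ α' ∈ crossSet P w α := by
  obtain rfl : P = positiveRoots Rt f := hP
  have hwα : w α ∈ positiveRoots Rt f := not_not.1 fun h => hαinv ⟨hα, h⟩
  have hne : (crossSet (positiveRoots Rt f) w α).Nonempty :=
    ⟨w α, mem_crossSet_iff.2 ⟨hwα, by simp⟩⟩
  obtain ⟨δ, hδ, hmin⟩ := Set.exists_min_image _ f (hfin.subset fun _ h => h.1.1) hne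
  refine ⟨δ, ⟨hδ.1, ?_⟩, hδ⟩
  rintro ⟨β, hβ, γ, hγ, rfl⟩
  rcases mem_crossSet_or_of_add_mem_crossSet hneg hcrys hf hw hw' hα.1 hαsimple hβ hγ hδ
    with h | h
  · linarith [hmin β h, map_add f β γ, hγ.2]
  · linarith [hmin γ h, map_add f β γ, hβ.2]

/-- For a Weyl group element `w` of a finite crystallographic root system and a
simple root `α` not in the inversion set of `w`, the set `cross_w(α)` contains a simple
root. Here a simple root is a positive root that is not a sum of two positive roots. -/
theorem crossSet_contains_simple {V : Type*} [NormedAddCommGroup V] [InnerProductSpace ℝ V]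
    (Rt : Set V) (hfin : Rt.Finite) (h0 : (0 : V) ∉ Rt)
    (hneg : ∀ β ∈ Rt, -β ∈ Rt)
    (hcrys : ∀ β ∈ Rt, ∀ γ ∈ Rt, 0 < (inner ℝ β γ : ℝ) → β - γ ∈ Rt ∨ β - γ = 0)
    (hspan : Submodule.span ℝ Rt = ⊤)
    (f : V →ₗ[ℝ] ℝ) (hf : ∀ β ∈ Rt, f β ≠ 0)
    (P : Set V) (hP : P = {β ∈ Rt | 0 < f β})
    (w : V ≃ₗ[ℝ] V) (hw : ∀ β ∈ Rt, w β ∈ Rt) (hw' : ∀ β ∈ Rt, w.symm β ∈ Rt)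
    (α : V) (hα : α ∈ P) (hαsimple : ¬∃ β ∈ P, ∃ γ ∈ P, α = β + γ)
    (hαinv : α ∉ invSet P w) :
    ∃ α', (α' ∈ P ∧ ¬∃ β ∈ P, ∃ γ ∈ P, α' = β + γ) ∧ α' ∈ crossSet P w α :=
  crossSet_contains_simple_general Rt hfin hneg hcrys f hf P hP w hw hw' α hα hαsimple hαinv
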